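/- arXiv:1404.2458 — 2 statements merged into one kernel-verified Lean document; each statement's English description precedes it below -/
import Mathlib

section
/- Suppose the costs observed under signal x and signal y satisfy |c_m(x) - c_m(y)| ≤ ℓ·N·κ·‖x - y‖₁ for each m = 1,...,M, where ℓ·N·κ·M < 1. If for every m the running minima are attained by the new observations (i.e., x_{2m-1} ≥ c_m(x) and y_{2m-1} ≥ c_m(y)) and the running maxima are attained by the old values (i.e., x_{2m} ≥ c_m(x) and y_{2m} ≥ c_m(y)), then the ℓ¹ distance of the updated signals is at most ℓ·N·κ·M·‖x - y‖₁ + Σ_m |x_{2m} - y_{2m}|, which is strictly less than ‖x - y‖₁ whenever Σ_m |x_{2m-1} - y_{2m-1}| > ℓ·N·κ·M·‖x - y‖₁. -/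
open Finset

theorem sum_abs_min_sub_min_add_abs_max_sub_max_eq {ι α : Type*} [Fintype ι] [AddCommGroup α]
    [LinearOrder α] (xlo xhi ylo yhi cx cy : ι → α)
    (hminx : ∀ m, cx m ≤ xlo m) (hminy : ∀ m, cy m ≤ ylo m)
    (hmaxx : ∀ m, cx m ≤ xhi m) (hmaxy : ∀ m, cy m ≤ yhi m) :
    ∑ m, (|min (xlo m) (cx m) - min (ylo m) (cy m)|
        + |max (xhi m) (cx m) - max (yhi m) (cy m)|)
      = ∑ m, |cx m - cy m| + ∑ m, |xhi m - yhi m| := by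
  rw [← sum_add_distrib]
  refine sum_congr rfl fun m _ => ?_
  rw [min_eq_right (hminx m), min_eq_right (hminy m),
    max_eq_left (hmaxx m), max_eq_left (hmaxy m)]

theorem sum_abs_sub_le_of_forall_abs_sub_le {ι : Type*} [Fintype ι] (cx cy : ι → ℝ) (K D : ℝ)
    (hc : ∀ m, |cx m - cy m| ≤ K * D) :
    ∑ m, |cx m - cy m| ≤ K * Fintype.card ι * D := by
  calc ∑ m, |cx m - cy m| ≤ Fintype.card ι • (K * D) := sum_le_card_nsmul _ _ _ fun m _ => hc m
    _ = K * Fintype.card ι * D := by rw [nsmul_eq_mul]; ring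

theorem case2_strict_contraction_general (M N : ℕ) (ℓ κ : ℝ)
    (xlo xhi ylo yhi cx cy : Fin M → ℝ)
    (hc : ∀ m, |cx m - cy m|
        ≤ ℓ * N * κ * ∑ m', (|xlo m' - ylo m'| + |xhi m' - yhi m'|))
    (hminx : ∀ m, cx m ≤ xlo m) (hminy : ∀ m, cy m ≤ ylo m)
    (hmaxx : ∀ m, cx m ≤ xhi m) (hmaxy : ∀ m, cy m ≤ yhi m) :
    (∑ m, (|min (xlo m) (cx m) - min (ylo m) (cy m)|
         + |max (xhi m) (cx m) - max (yhi m) (cy m)|)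
      ≤ ℓ * N * κ * M * (∑ m, (|xlo m - ylo m| + |xhi m - yhi m|))
        + ∑ m, |xhi m - yhi m|)
    ∧ (ℓ * N * κ * M * (∑ m, (|xlo m - ylo m| + |xhi m - yhi m|))
          < ∑ m, |xlo m - ylo m| →
        ℓ * N * κ * M * (∑ m, (|xlo m - ylo m| + |xhi m - yhi m|))
          + ∑ m, |xhi m - yhi m|
        < ∑ m, (|xlo m - ylo m| + |xhi m - yhi m|)) := by
  refine ⟨?_, fun h => ?_⟩
  · rw [sum_abs_min_sub_min_add_abs_max_sub_max_eq xlo xhi ylo yhi cx cy hminx hminy hmaxx hmaxy]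
    gcongr
    simpa using sum_abs_sub_le_of_forall_abs_sub_le cx cy (ℓ * N * κ) _ hc
  · rw [sum_add_distrib] at h ⊢
    exact add_lt_add_left h _

/-- Case 2 of the convergence proof: if the costs are Lipschitz-close with
constant ℓ·N·κ, ℓ·N·κ·M < 1, the running minima are attained by the new
observations and the running maxima by the old values, then the ℓ¹ distance of
the updated signals is at most ℓ·N·κ·M·‖x−y‖₁ + Σ_m |x_{2m} − y_{2m}|, which is
strictly smaller than ‖x−y‖₁ whenever Σ_m |x_{2m-1} − y_{2m-1}| > ℓ·N·κ·M·‖x−y‖₁. -/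
theorem case2_strict_contraction (M N : ℕ) (ℓ κ : ℝ)
    (xlo xhi ylo yhi cx cy : Fin M → ℝ)
    (hc : ∀ m, |cx m - cy m|
        ≤ ℓ * N * κ * ∑ m', (|xlo m' - ylo m'| + |xhi m' - yhi m'|))
    (hsmall : ℓ * N * κ * M < 1)
    (hminx : ∀ m, cx m ≤ xlo m) (hminy : ∀ m, cy m ≤ ylo m)
    (hmaxx : ∀ m, cx m ≤ xhi m) (hmaxy : ∀ m, cy m ≤ yhi m) :
    (∑ m, (|min (xlo m) (cx m) - min (ylo m) (cy m)|
         + |max (xhi m) (cx m) - max (yhi m) (cy m)|)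
      ≤ ℓ * N * κ * M * (∑ m, (|xlo m - ylo m| + |xhi m - yhi m|))
        + ∑ m, |xhi m - yhi m|)
    ∧ (ℓ * N * κ * M * (∑ m, (|xlo m - ylo m| + |xhi m - yhi m|))
          < ∑ m, |xlo m - ylo m| →
        ℓ * N * κ * M * (∑ m, (|xlo m - ylo m| + |xhi m - yhi m|))
          + ∑ m, |xhi m - yhi m|
        < ∑ m, (|xlo m - ylo m| + |xhi m - yhi m|)) :=
  case2_strict_contraction_general M N ℓ κ xlo xhi ylo yhi cx cy hc hminx hminy hmaxx hmaxy
end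

section
/- Let c₁ = c₂ = c where c(n) = 1 if n < (N+1)/2 and c(n) = (J+1)^{(2n-N)/N} if n ≥ (N+1)/2, for an odd integer N ≥ 3 and real J > 0. Then the social cost C(n₁, n₂) = (n₁/N)·c(n₁) + (n₂/N)·c(n₂), subject to n₁ + n₂ = N with n₁, n₂ ∈ ℕ, is minimized exactly at {n₁, n₂} = {⌊N/2⌋, ⌈N/2⌉}, where it equals (⌈N/2⌉/N)·(J+1)^{1/N} + ⌊N/2⌋/N. -/
/-! Write `N = 2k + 1`. Every agent on the minority side (at most `k` agents) pays exactly `1`,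
so the total cost of a split `(m, N - m)` with `m > k` is `N + m (c m - 1)`. On the majority
side the excess `m (c m - 1)` is a product of two positive, increasing factors once `J > 0`,
hence strictly increasing in `m`, and the unique minimum is the smallest majority `m = k + 1`. -/

/-- The cost `c(n)` of the construction, with `a = J + 1`. -/
noncomputable def flapCost (N : ℕ) (a : ℝ) (n : ℕ) : ℝ :=
  if 2 * n < N + 1 then 1 else a ^ ((2 * (n : ℝ) - N) / N)

/-- `N` times the social cost of the split `(m, n)`. -/
def totalCost (c : ℕ → ℝ) (m n : ℕ) : ℝ :=
  m * c m + n * c n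

theorem totalCost_comm (c : ℕ → ℝ) (m n : ℕ) : totalCost c m n = totalCost c n m :=
  add_comm _ _

section Split

variable {c : ℕ → ℝ} {k m n : ℕ}

theorem totalCost_eq_of_minority (hmin : ∀ n ≤ k, c n = 1) (hmn : m + n = 2 * k + 1)
    (hm : k + 1 ≤ m) : totalCost c m n = 2 * k + 1 + m * (c m - 1) := by
  have hn : (n : ℝ) = 2 * k + 1 - m := by
    rw [eq_sub_iff_add_eq, add_comm]
    exact_mod_cast hmn
  rw [totalCost, hmin n (by omega), hn]
  ring

theorem totalCost_balanced_le_of_majority (hmin : ∀ n ≤ k, c n = 1)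
    (hmono : StrictMonoOn (fun n : ℕ => (n : ℝ) * (c n - 1)) (Set.Ici (k + 1)))
    (hmn : m + n = 2 * k + 1) (hm : k + 1 ≤ m) :
    totalCost c (k + 1) k ≤ totalCost c m n
      ∧ (totalCost c m n = totalCost c (k + 1) k → m = k + 1) := by
  have hbal : (k + 1) + k = 2 * k + 1 := by omega
  have hk : k + 1 ∈ Set.Ici (k + 1) := Set.self_mem_Ici
  rw [totalCost_eq_of_minority hmin hmn hm, totalCost_eq_of_minority hmin hbal le_rfl,
    add_le_add_iff_left, add_right_inj]
  exact ⟨(hmono.le_iff_le hk hm).2 hm, fun h => hmono.injOn hm hk h⟩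

theorem totalCost_balanced_le (hmin : ∀ n ≤ k, c n = 1)
    (hmono : StrictMonoOn (fun n : ℕ => (n : ℝ) * (c n - 1)) (Set.Ici (k + 1)))
    (hmn : m + n = 2 * k + 1) :
    totalCost c (k + 1) k ≤ totalCost c m n
      ∧ (totalCost c m n = totalCost c (k + 1) k →
          (m = k + 1 ∧ n = k) ∨ (m = k ∧ n = k + 1)) := by
  rcases le_or_gt (k + 1) m with hm | hm
  · obtain ⟨hle, heq⟩ := totalCost_balanced_le_of_majority hmin hmono hmn hm
    exact ⟨hle, fun h => have hm := heq h; Or.inl ⟨hm, by omega⟩⟩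
  · obtain ⟨hle, heq⟩ :=
      totalCost_balanced_le_of_majority hmin hmono (by omega : n + m = 2 * k + 1) (by omega)
    rw [totalCost_comm c m n]
    exact ⟨hle, fun h => have hn := heq h; Or.inr ⟨by omega, hn⟩⟩

end Split

section FlapCost

variable {N : ℕ} {a : ℝ} {m n : ℕ}

theorem flapCost_of_two_mul_lt (h : 2 * n < N + 1) : flapCost N a n = 1 :=
  if_pos h

theorem flapCost_of_le_two_mul (h : N + 1 ≤ 2 * n) :
    flapCost N a n = a ^ ((2 * (n : ℝ) - N) / N) :=
  if_neg (by omega)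

theorem one_lt_flapCost (hN : 0 < N) (ha : 1 < a) (h : N + 1 ≤ 2 * n) : 1 < flapCost N a n := by
  rw [flapCost_of_le_two_mul h]
  apply Real.one_lt_rpow ha
  have h' : (N : ℝ) + 1 ≤ 2 * n := by exact_mod_cast h
  have hN' : (0 : ℝ) < N := by exact_mod_cast hN
  apply div_pos <;> linarith

theorem flapCost_le_flapCost (ha : 1 ≤ a) (hm : N + 1 ≤ 2 * m) (hmn : m ≤ n) :
    flapCost N a m ≤ flapCost N a n := by
  rw [flapCost_of_le_two_mul hm, flapCost_of_le_two_mul (by omega)]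
  apply Real.rpow_le_rpow_of_exponent_le ha
  have : (m : ℝ) ≤ n := by exact_mod_cast hmn
  gcongr

theorem strictMonoOn_mul_flapCost_sub_one (ha : 1 < a) (k : ℕ) :
    StrictMonoOn (fun n : ℕ => (n : ℝ) * (flapCost (2 * k + 1) a n - 1)) (Set.Ici (k + 1)) := by
  intro m hkm n _ hmn
  have hm : 2 * k + 1 + 1 ≤ 2 * m := by simp only [Set.mem_Ici] at hkm; omega
  apply mul_lt_mul (by exact_mod_cast hmn)
  · exact sub_le_sub_right (flapCost_le_flapCost ha.le hm hmn.le) 1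
  · exact sub_pos.2 (one_lt_flapCost (by omega) ha hm)
  · positivity

theorem flapCost_succ (a : ℝ) (k : ℕ) :
    flapCost (2 * k + 1) a (k + 1) = a ^ ((1 : ℝ) / (2 * k + 1)) := by
  rw [flapCost_of_le_two_mul (by omega)]
  push_cast
  ring_nf

end FlapCost

theorem balanced_split_minimizes_social_cost_general (N : ℕ) (hodd : Odd N)
    (J : ℝ) (hJ : 0 < J) (c : ℕ → ℝ) (C : ℕ → ℕ → ℝ)
    (hc : ∀ n : ℕ, c n = if 2 * n < N + 1 then (1 : ℝ)
          else (J + 1) ^ ((2 * (n : ℝ) - N) / N))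
    (hC : ∀ n₁ n₂ : ℕ, C n₁ n₂ = ((n₁ : ℝ) / N) * c n₁ + ((n₂ : ℝ) / N) * c n₂) :
    C ((N + 1) / 2) (N / 2)
        = (((N + 1) / 2 : ℕ) : ℝ) / N * (J + 1) ^ ((1 : ℝ) / N)
          + ((N / 2 : ℕ) : ℝ) / N
    ∧ ∀ n₁ n₂ : ℕ, n₁ + n₂ = N →
        (C ((N + 1) / 2) (N / 2) ≤ C n₁ n₂
        ∧ (C n₁ n₂ = C ((N + 1) / 2) (N / 2) →
            (n₁ = (N + 1) / 2 ∧ n₂ = N / 2) ∨ (n₁ = N / 2 ∧ n₂ = (N + 1) / 2))) := by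
  obtain ⟨k, rfl⟩ := hodd
  obtain rfl : c = flapCost (2 * k + 1) (J + 1) := funext hc
  have hC' (m n : ℕ) : C m n = totalCost (flapCost (2 * k + 1) (J + 1)) m n / (2 * k + 1) := by
    rw [hC, totalCost]; push_cast; ring
  have hpos : (0 : ℝ) < 2 * k + 1 := by positivity
  rw [show (2 * k + 1 + 1) / 2 = k + 1 by omega, show (2 * k + 1) / 2 = k by omega]
  refine ⟨?_, fun m n hmn => ?_⟩
  · rw [hC, flapCost_succ, flapCost_of_two_mul_lt (by omega)]
    push_cast
    ring
  · obtain ⟨hle, heq⟩ := totalCost_balanced_le (fun n hn => flapCost_of_two_mul_lt (by omega))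
      (strictMonoOn_mul_flapCost_sub_one (lt_add_of_pos_left 1 hJ) k) hmn
    rw [hC', hC']
    exact ⟨div_le_div_of_nonneg_right hle hpos.le, fun h => heq ((div_left_inj' hpos.ne').1 h)⟩

/-- In the price-of-flapping construction, the social cost
C(n₁,n₂) = (n₁/N)c(n₁) + (n₂/N)c(n₂) subject to n₁ + n₂ = N is minimized exactly
at the balanced split {⌈N/2⌉, ⌊N/2⌋}, with value (⌈N/2⌉/N)(J+1)^{1/N} + ⌊N/2⌋/N. -/
theorem balanced_split_minimizes_social_cost (N : ℕ) (hN : 3 ≤ N) (hodd : Odd N)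
    (J : ℝ) (hJ : 0 < J) (c : ℕ → ℝ) (C : ℕ → ℕ → ℝ)
    (hc : ∀ n : ℕ, c n = if 2 * n < N + 1 then (1 : ℝ)
          else (J + 1) ^ ((2 * (n : ℝ) - N) / N))
    (hC : ∀ n₁ n₂ : ℕ, C n₁ n₂ = ((n₁ : ℝ) / N) * c n₁ + ((n₂ : ℝ) / N) * c n₂) :
    C ((N + 1) / 2) (N / 2)
        = (((N + 1) / 2 : ℕ) : ℝ) / N * (J + 1) ^ ((1 : ℝ) / N)
          + ((N / 2 : ℕ) : ℝ) / N
    ∧ ∀ n₁ n₂ : ℕ, n₁ + n₂ = N →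
        (C ((N + 1) / 2) (N / 2) ≤ C n₁ n₂
        ∧ (C n₁ n₂ = C ((N + 1) / 2) (N / 2) →
            (n₁ = (N + 1) / 2 ∧ n₂ = N / 2) ∨ (n₁ = N / 2 ∧ n₂ = (N + 1) / 2))) :=
  balanced_split_minimizes_social_cost_general N hodd J hJ c C hc hC
end
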